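/- arXiv:2408.11213 — 8 statements merged into one kernel-verified Lean document; each statement's English description precedes it below -/
import Mathlib

section
/- If every finite independent union-closed family of finite sets, other than ∅ and {∅}, has an element of its universe belonging to at least half of its sets, then every finite union-closed family of finite sets, other than ∅ and {∅}, has an element of its universe belonging to at least half of its sets. -/
/-- The universe `U(𝓕)` of a finite family of finite sets: the union of its members. -/
def famUniv (F : Finset (Finset ℕ)) : Finset ℕ := F.sup id

/-- `𝓕_a = {F ∈ 𝓕 : a ∈ F}`. -/
def famAt (F : Finset (Finset ℕ)) (a : ℕ) : Finset (Finset ℕ) := F.filter (fun X => a ∈ X)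

/-- `𝓕` is union-closed. -/
def unionClosed (F : Finset (Finset ℕ)) : Prop := ∀ A ∈ F, ∀ B ∈ F, A ∪ B ∈ F

/-- `𝓕` is independent: for every `a ∈ U(𝓕)` and every `S ⊆ U(𝓕) \ {a}`, either some
member of `𝓕` avoiding `a` meets `S`, or some member of `𝓕` containing `a` misses `S`. -/
def independent (F : Finset (Finset ℕ)) : Prop :=
  ∀ a ∈ famUniv F, ∀ S ⊆ famUniv F \ {a},
    (∃ O ∈ F, a ∉ O ∧ (O ∩ S).Nonempty) ∨ (∃ O ∈ F, a ∈ O ∧ O ∩ S = ∅)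

/-! If `𝓕` is not independent, a witness `(a, S)` makes membership of `a` in a member of `𝓕`
equivalent to meeting `S`, where `a ∉ S`. Deleting `a` from every member is then injective on `𝓕`,
keeps it union-closed and keeps every frequency `|𝓕_b|` with `b ≠ a`, while the universe shrinks.
Induction on the size of the universe therefore reduces every union-closed family to an
independent one. -/

/-- The Frankl property of `𝓕`. -/
def HasFrequentElement (F : Finset (Finset ℕ)) : Prop :=
  ∃ a ∈ famUniv F, F.card ≤ 2 * (famAt F a).card

lemma mem_famUniv {F : Finset (Finset ℕ)} {a : ℕ} : a ∈ famUniv F ↔ ∃ X ∈ F, a ∈ X := by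
  simp [famUniv, Finset.mem_sup]

lemma famUniv_image_erase_subset (F : Finset (Finset ℕ)) (a : ℕ) :
    famUniv (F.image (·.erase a)) ⊆ (famUniv F).erase a := by
  intro c hc
  obtain ⟨_, hZ, hcZ⟩ := mem_famUniv.mp hc
  obtain ⟨X, hX, rfl⟩ := Finset.mem_image.mp hZ
  obtain ⟨hca, hcX⟩ := Finset.mem_erase.mp hcZ
  exact Finset.mem_erase.mpr ⟨hca, mem_famUniv.mpr ⟨X, hX, hcX⟩⟩

lemma card_famUniv_image_erase_lt {F : Finset (Finset ℕ)} {a : ℕ} (ha : a ∈ famUniv F) :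
    (famUniv (F.image (·.erase a))).card < (famUniv F).card :=
  (Finset.card_le_card (famUniv_image_erase_subset F a)).trans_lt (Finset.card_erase_lt_of_mem ha)

lemma unionClosed.image_erase {F : Finset (Finset ℕ)} (hF : unionClosed F) (a : ℕ) :
    unionClosed (F.image (·.erase a)) := by
  rintro _ hA _ hB
  obtain ⟨X, hX, rfl⟩ := Finset.mem_image.mp hA
  obtain ⟨Y, hY, rfl⟩ := Finset.mem_image.mp hB
  rw [← Finset.erase_union_distrib]
  exact Finset.mem_image_of_mem _ (hF X hX Y hY)

lemma image_erase_ne_singleton_empty {F : Finset (Finset ℕ)} {a b : ℕ} (hb : b ∈ famUniv F)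
    (hba : b ≠ a) : F.image (·.erase a) ≠ {∅} := by
  intro hF
  obtain ⟨X, hX, hbX⟩ := mem_famUniv.mp hb
  have hXa : X.erase a ∈ F.image (·.erase a) := Finset.mem_image_of_mem _ hX
  rw [hF, Finset.mem_singleton] at hXa
  simpa [hXa] using Finset.mem_erase.mpr ⟨hba, hbX⟩

lemma famAt_image_erase (F : Finset (Finset ℕ)) {a b : ℕ} (hba : b ≠ a) :
    famAt (F.image (·.erase a)) b = (famAt F b).image (·.erase a) := by
  simp only [famAt, Finset.filter_image, Finset.mem_erase, ne_eq, hba, not_false_eq_true,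
    true_and]

lemma HasFrequentElement.of_image_erase {F : Finset (Finset ℕ)} {a : ℕ}
    (hinj : Set.InjOn (·.erase a) (F : Set (Finset ℕ)))
    (hF : HasFrequentElement (F.image (·.erase a))) : HasFrequentElement F := by
  obtain ⟨b, hb, hcard⟩ := hF
  obtain ⟨hba, hbF⟩ := Finset.mem_erase.mp (famUniv_image_erase_subset F a hb)
  refine ⟨b, hbF, ?_⟩
  have hAt : (famAt (F.image (·.erase a)) b).card = (famAt F b).card := by
    rw [famAt_image_erase F hba]
    exact Finset.card_image_of_injOn (hinj.mono fun X hX => (Finset.mem_filter.mp hX).1)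
  rwa [Finset.card_image_of_injOn hinj, hAt] at hcard

lemma injOn_erase_of_mem_iff {α : Type*} [DecidableEq α] {F : Finset (Finset α)} {a : α}
    {S : Finset α} (haS : a ∉ S) (hsep : ∀ O ∈ F, a ∈ O ↔ (O ∩ S).Nonempty) :
    Set.InjOn (·.erase a) (F : Set (Finset α)) := by
  have hinter : ∀ X : Finset α, X.erase a ∩ S = X ∩ S := fun X => by
    rw [Finset.erase_inter, Finset.erase_eq_of_notMem (fun h => haS (Finset.mem_inter.mp h).2)]
  intro X hX Y hY hXY
  have haXY : a ∈ X ↔ a ∈ Y := by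
    rw [hsep X hX, hsep Y hY, ← hinter X, ← hinter Y]
    exact Iff.of_eq (congrArg (fun Z => (Z ∩ S).Nonempty) hXY)
  ext c
  by_cases hca : c = a
  · exact hca ▸ haXY
  · simpa [Finset.mem_erase, hca] using Finset.ext_iff.mp hXY c

lemma exists_separating_of_not_independent {F : Finset (Finset ℕ)} (hF : ¬ independent F) :
    ∃ a ∈ famUniv F, ∃ S ⊆ famUniv F \ {a}, ∀ O ∈ F, a ∈ O ↔ (O ∩ S).Nonempty := by
  simp only [independent, not_forall, not_or, not_exists, not_and] at hF
  obtain ⟨a, ha, S, hS, hout, hin⟩ := hF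
  refine ⟨a, ha, S, hS, fun O hO => ⟨fun haO => ?_, fun hOS => ?_⟩⟩
  · exact Finset.nonempty_iff_ne_empty.mpr (hin O hO haO)
  · by_contra haO
    exact hout O hO haO hOS

lemma exists_injOn_erase_of_not_independent {F : Finset (Finset ℕ)} (hF : ¬ independent F) :
    ∃ a ∈ famUniv F, Set.InjOn (·.erase a) (F : Set (Finset ℕ)) ∧
      ∃ b ∈ famUniv F, b ≠ a := by
  obtain ⟨a, ha, S, hS, hsep⟩ := exists_separating_of_not_independent hF
  have haS : a ∉ S := fun h => by simpa using (Finset.mem_sdiff.mp (hS h)).2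
  obtain ⟨O, hO, haO⟩ := mem_famUniv.mp ha
  obtain ⟨b, hb⟩ := (hsep O hO).mp haO
  obtain ⟨hbF, hba⟩ := Finset.mem_sdiff.mp (hS (Finset.mem_inter.mp hb).2)
  exact ⟨a, ha, injOn_erase_of_mem_iff haS hsep, b, hbF, by simpa using hba⟩

theorem stmt3
    (h : ∀ F : Finset (Finset ℕ), unionClosed F → independent F → F ≠ ∅ → F ≠ {∅} →
      ∃ a ∈ famUniv F, F.card ≤ 2 * (famAt F a).card) :
    ∀ F : Finset (Finset ℕ), unionClosed F → F ≠ ∅ → F ≠ {∅} →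
      ∃ a ∈ famUniv F, F.card ≤ 2 * (famAt F a).card := by
  intro F
  induction hn : (famUniv F).card using Nat.strong_induction_on generalizing F with
  | _ n ih =>
  intro huc hne hne'
  by_cases hind : independent F
  · exact h F huc hind hne hne'
  obtain ⟨a, ha, hinj, b, hb, hba⟩ := exists_injOn_erase_of_not_independent hind
  exact HasFrequentElement.of_image_erase hinj <|
    ih _ (hn ▸ card_famUniv_image_erase_lt ha) _ rfl (huc.image_erase a)
      (by simpa using hne) (image_erase_ne_singleton_empty hb hba)
end

section
/- Assume every finite union-closed family of finite sets other than ∅ and {∅} has an element of its universe belonging to at least half of its sets. Let 𝓕 be a finite union-closed family other than ∅ and {∅} with |U(𝓕)| = n. Then there exist sets S_1 ⊆ S_2 ⊆ ⋯ ⊆ S_n ⊆ U(𝓕) such that, for every positive integer k ≤ n, |S_k| = k and the number of sets of 𝓕 containing S_k is at least |𝓕|/2^k. -/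
lemma univ_mem (F : Finset (Finset ℕ)) (huc : unionClosed F) (h1 : F ≠ ∅) :
    famUniv F ∈ F := by
  have hne : F.Nonempty := Finset.nonempty_iff_ne_empty.mpr h1
  have : famUniv F = F.sup' hne id := (Finset.sup'_eq_sup hne id).symm
  rw [this]
  exact Finset.sup'_mem (↑F : Set (Finset ℕ)) (fun x hx y hy => huc x hx y hy) F hne id
    (fun i hi => hi)

lemma step_lemma
    (frankl : ∀ F : Finset (Finset ℕ), unionClosed F → F ≠ ∅ → F ≠ {∅} →
      ∃ a ∈ famUniv F, F.card ≤ 2 * (famAt F a).card)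
    (F : Finset (Finset ℕ)) (huc : unionClosed F) (h1 : F ≠ ∅)
    (S : Finset ℕ) (hS : S ⊆ famUniv F) (hlt : S.card < (famUniv F).card) :
    ∃ a, a ∈ famUniv F ∧ a ∉ S ∧
      (F.filter (fun X => S ⊆ X)).card ≤ 2 * (F.filter (fun X => insert a S ⊆ X)).card := by
  classical
  set U := famUniv F with hUdef
  have hUF : U ∈ F := univ_mem F huc h1
  set G := F.filter (fun X => S ⊆ X) with hGdef
  have hUG : U ∈ G := Finset.mem_filter.mpr ⟨hUF, hS⟩
  have hGsub : ∀ X ∈ G, S ⊆ X ∧ X ∈ F := by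
    intro X hX
    have := Finset.mem_filter.mp hX
    exact ⟨this.2, this.1⟩
  set F' := G.image (fun X => X \ S) with hF'def
  have hinj : Set.InjOn (fun X => X \ S) (↑G : Set (Finset ℕ)) := by
    intro X hX Y hY h
    have hX' : S ⊆ X := (hGsub X hX).1
    have hY' : S ⊆ Y := (hGsub Y hY).1
    have h2 : X \ S = Y \ S := h
    have : X \ S ∪ S = Y \ S ∪ S := by rw [h2]
    rwa [Finset.sdiff_union_of_subset hX', Finset.sdiff_union_of_subset hY'] at this
  have hucF' : unionClosed F' := by
    intro A hA B hB
    obtain ⟨X, hX, rfl⟩ := Finset.mem_image.mp hA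
    obtain ⟨Y, hY, rfl⟩ := Finset.mem_image.mp hB
    have hXY : X ∪ Y ∈ G := by
      refine Finset.mem_filter.mpr ⟨huc X (hGsub X hX).2 Y (hGsub Y hY).2, ?_⟩
      exact (hGsub X hX).1.trans Finset.subset_union_left
    refine Finset.mem_image.mpr ⟨X ∪ Y, hXY, ?_⟩
    rw [Finset.union_sdiff_distrib]
  have hUS : U \ S ∈ F' := Finset.mem_image.mpr ⟨U, hUG, rfl⟩
  have hUSne : U \ S ≠ ∅ := by
    intro h
    have := Finset.card_sdiff_of_subset hS
    rw [h] at this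
    simp only [Finset.card_empty] at this
    omega
  have hF'ne : F' ≠ ∅ := by
    intro h
    rw [h] at hUS
    exact absurd hUS (Finset.notMem_empty _)
  have hF'ne1 : F' ≠ {∅} := by
    intro h
    rw [h] at hUS
    exact hUSne (Finset.mem_singleton.mp hUS)
  obtain ⟨a, haU', hhalf⟩ := frankl F' hucF' hF'ne hF'ne1
  obtain ⟨A, hA, haA⟩ := Finset.mem_sup.mp haU'
  obtain ⟨X0, hX0, rfl⟩ := Finset.mem_image.mp hA
  simp only [id] at haA
  have haS : a ∉ S := (Finset.mem_sdiff.mp haA).2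
  have haU : a ∈ U := Finset.mem_sup.mpr ⟨X0, (hGsub X0 hX0).2, (Finset.mem_sdiff.mp haA).1⟩
  refine ⟨a, haU, haS, ?_⟩
  have hcard1 : F'.card = G.card := Finset.card_image_of_injOn hinj
  -- famAt F' a = image of G.filter (a ∈ ·)
  have hat : famAt F' a = (G.filter (fun X => a ∈ X)).image (fun X => X \ S) := by
    ext A
    simp only [famAt, Finset.mem_filter, Finset.mem_image, hF'def]
    constructor
    · rintro ⟨⟨X, hX, rfl⟩, haA'⟩
      exact ⟨X, ⟨hX, (Finset.mem_sdiff.mp haA').1⟩, rfl⟩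
    · rintro ⟨X, ⟨hX, haX⟩, rfl⟩
      exact ⟨⟨X, hX, rfl⟩, Finset.mem_sdiff.mpr ⟨haX, haS⟩⟩
  have hcard2 : (famAt F' a).card = (G.filter (fun X => a ∈ X)).card := by
    rw [hat]
    exact Finset.card_image_of_injOn (hinj.mono (by
      intro X hX
      exact Finset.mem_coe.mpr (Finset.mem_of_mem_filter X (Finset.mem_coe.mp hX))))
  have hGeq : G.filter (fun X => a ∈ X) = F.filter (fun X => insert a S ⊆ X) := by
    rw [hGdef, Finset.filter_filter]
    apply Finset.filter_congr
    intro X _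
    simp only [Finset.insert_subset_iff]
    tauto
  calc G.card = F'.card := hcard1.symm
    _ ≤ 2 * (famAt F' a).card := hhalf
    _ = 2 * (G.filter (fun X => a ∈ X)).card := by rw [hcard2]
    _ = 2 * (F.filter (fun X => insert a S ⊆ X)).card := by rw [hGeq]

noncomputable def seqS (F : Finset (Finset ℕ)) : ℕ → Finset ℕ
  | 0 => ∅
  | (k + 1) =>
      let S := seqS F k
      if h : ∃ a, a ∈ famUniv F ∧ a ∉ S ∧
          (F.filter (fun X => S ⊆ X)).card ≤ 2 * (F.filter (fun X => insert a S ⊆ X)).card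
      then insert h.choose S else S

theorem stmt4
    (frankl : ∀ F : Finset (Finset ℕ), unionClosed F → F ≠ ∅ → F ≠ {∅} →
      ∃ a ∈ famUniv F, F.card ≤ 2 * (famAt F a).card)
    (F : Finset (Finset ℕ)) (huc : unionClosed F) (h1 : F ≠ ∅) (h2 : F ≠ {∅})
    (n : ℕ) (hn : (famUniv F).card = n) :
    ∃ S : ℕ → Finset ℕ,
      (∀ k, 1 ≤ k → k < n → S k ⊆ S (k + 1)) ∧
      (∀ k, 1 ≤ k → k ≤ n →
        S k ⊆ famUniv F ∧ (S k).card = k ∧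
          F.card ≤ 2 ^ k * (F.filter (fun X => S k ⊆ X)).card) := by
  classical
  refine ⟨seqS F, ?_, ?_⟩
  · intro k _ _
    show seqS F k ⊆ seqS F (k + 1)
    rw [seqS]
    split
    · exact Finset.subset_insert _ _
    · exact subset_rfl
  · have key : ∀ k, k ≤ n → seqS F k ⊆ famUniv F ∧ (seqS F k).card = k ∧
        F.card ≤ 2 ^ k * (F.filter (fun X => seqS F k ⊆ X)).card := by
      intro k
      induction k with
      | zero =>
        intro _
        refine ⟨Finset.empty_subset _, by simp [seqS], ?_⟩
        have : F.filter (fun X => seqS F 0 ⊆ X) = F := by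
          apply Finset.filter_true_of_mem
          intro X _
          show seqS F 0 ⊆ X
          rw [seqS]
          exact Finset.empty_subset _
        rw [this]
        omega
      | succ k ih =>
        intro hk
        obtain ⟨hsub, hcard, hbound⟩ := ih (Nat.le_of_succ_le hk)
        have hlt : (seqS F k).card < (famUniv F).card := by rw [hcard, hn]; omega
        have hex : ∃ a, a ∈ famUniv F ∧ a ∉ seqS F k ∧
            (F.filter (fun X => seqS F k ⊆ X)).card ≤
              2 * (F.filter (fun X => insert a (seqS F k) ⊆ X)).card :=
          step_lemma frankl F huc h1 (seqS F k) hsub hlt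
        have hseq : seqS F (k + 1) = insert hex.choose (seqS F k) := by
          rw [seqS, dif_pos hex]
        obtain ⟨haU, haS, hhalf⟩ := hex.choose_spec
        refine ⟨?_, ?_, ?_⟩
        · rw [hseq]
          exact Finset.insert_subset haU hsub
        · rw [hseq, Finset.card_insert_of_notMem haS, hcard]
        · rw [hseq]
          calc F.card ≤ 2 ^ k * (F.filter (fun X => seqS F k ⊆ X)).card := hbound
            _ ≤ 2 ^ k * (2 * (F.filter (fun X => insert hex.choose (seqS F k) ⊆ X)).card) :=
                Nat.mul_le_mul_left _ hhalf
            _ = 2 ^ (k + 1) * (F.filter (fun X => insert hex.choose (seqS F k) ⊆ X)).card := by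
                ring
    intro k hk1 hkn
    exact key k hkn
end

section
/- Suppose 𝓕 is a finite union-closed family of finite sets, 𝓕 ≠ ∅, {∅}, with no element of U(𝓕) belonging to at least |𝓕|/2 sets of 𝓕, such that |𝓕| is minimal among all such failing families, and |U(𝓕)| is minimal among all such failing families with |𝓕| sets. Then for every a ∈ U(𝓕), the number of a-problematic sets of 𝓕 is at least 3. -/
/-- `𝓕` fails Frankl's conjecture: no element of `U(𝓕)` is in at least `|𝓕|/2` sets. -/
def failsFrankl (F : Finset (Finset ℕ)) : Prop :=
  ∀ a ∈ famUniv F, 2 * (famAt F a).card < F.card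

lemma union_singleton_eq_insert (O : Finset ℕ) (a : ℕ) : O ∪ {a} = insert a O := by
  rw [Finset.union_comm, ← Finset.insert_eq]

lemma three_le_card (F : Finset (Finset ℕ)) (h1 : F ≠ ∅) (h2 : F ≠ {∅})
    (hfail : failsFrankl F) : 3 ≤ F.card := by
  obtain ⟨X, hX, hXne⟩ : ∃ X ∈ F, X ≠ ∅ := by
    by_contra h
    push_neg at h
    apply h2
    apply Finset.Subset.antisymm
    · intro Y hY
      simp [h Y hY]
    · intro Y hY
      simp only [Finset.mem_singleton] at hY
      obtain ⟨Z, hZ⟩ := Finset.nonempty_iff_ne_empty.2 h1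
      have := h Z hZ
      subst this
      rwa [hY]
  obtain ⟨a, ha⟩ := Finset.nonempty_iff_ne_empty.2 hXne
  have haU : a ∈ famUniv F := mem_famUniv.2 ⟨X, hX, ha⟩
  have h1' : 1 ≤ (famAt F a).card := by
    apply Finset.card_pos.2
    exact ⟨X, Finset.mem_filter.2 ⟨hX, ha⟩⟩
  have := hfail a haU
  omega

/-- Every element of the universe of a minimal failing family has a problematic set. -/
lemma exists_problematic (F : Finset (Finset ℕ)) (huc : unionClosed F)
    (h1 : F ≠ ∅) (h2 : F ≠ {∅}) (hfail : failsFrankl F)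
    (hminUniv : ∀ G : Finset (Finset ℕ), unionClosed G → G ≠ ∅ → G ≠ {∅} →
      failsFrankl G → G.card = F.card → (famUniv F).card ≤ (famUniv G).card) :
    ∀ c ∈ famUniv F, ∃ O ∈ F, c ∉ O ∧ O ∪ {c} ∈ F := by
  intro c hc
  by_contra hno
  push_neg at hno
  -- hno : ∀ O ∈ F, c ∉ O → O ∪ {c} ∉ F
  set f : Finset ℕ → Finset ℕ := fun X => X.erase c with hf
  set G : Finset (Finset ℕ) := F.image f with hG
  have hinj : Set.InjOn f ↑F := by
    intro X hX Y hY hXY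
    simp only [Finset.mem_coe] at hX hY
    simp only [hf] at hXY
    by_cases hcX : c ∈ X <;> by_cases hcY : c ∈ Y
    · have : insert c (X.erase c) = insert c (Y.erase c) := by rw [hXY]
      rwa [Finset.insert_erase hcX, Finset.insert_erase hcY] at this
    · exfalso
      have hYe : Y.erase c = Y := Finset.erase_eq_of_notMem hcY
      have hXY' : X = Y ∪ {c} := by
        rw [union_singleton_eq_insert, ← hYe, ← hXY, Finset.insert_erase hcX]
      exact hno Y hY hcY (hXY' ▸ hX)
    · exfalso
      have hXe : X.erase c = X := Finset.erase_eq_of_notMem hcX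
      have hYX' : Y = X ∪ {c} := by
        rw [union_singleton_eq_insert, ← hXe, hXY, Finset.insert_erase hcY]
      exact hno X hX hcX (hYX' ▸ hY)
    · rw [← Finset.erase_eq_of_notMem hcX, ← Finset.erase_eq_of_notMem hcY]
      exact hXY
  have hcard : G.card = F.card := Finset.card_image_of_injOn hinj
  have hucG : unionClosed G := by
    intro A hA B hB
    obtain ⟨X, hX, rfl⟩ := Finset.mem_image.1 hA
    obtain ⟨Y, hY, rfl⟩ := Finset.mem_image.1 hB
    refine Finset.mem_image.2 ⟨X ∪ Y, huc X hX Y hY, ?_⟩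
    simp [hf, Finset.erase_union_distrib]
  have hGne : G ≠ ∅ := by
    intro h
    apply h1
    rw [← Finset.card_eq_zero, ← hcard, h, Finset.card_empty]
  have hGne' : G ≠ {∅} := by
    intro h
    have h3 := three_le_card F h1 h2 hfail
    rw [← hcard, h, Finset.card_singleton] at h3
    omega
  have hfailG : failsFrankl G := by
    intro d hd
    obtain ⟨A, hA, hdA⟩ := mem_famUniv.1 hd
    obtain ⟨X, hX, rfl⟩ := Finset.mem_image.1 hA
    have hdc : d ≠ c := (Finset.mem_erase.1 hdA).1
    have hdU : d ∈ famUniv F := mem_famUniv.2 ⟨X, hX, (Finset.mem_erase.1 hdA).2⟩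
    have hsub : famAt G d ⊆ Finset.image f (famAt F d) := by
      intro A hA'
      obtain ⟨hAG, hdA'⟩ := Finset.mem_filter.1 hA'
      obtain ⟨Y, hY, rfl⟩ := Finset.mem_image.1 hAG
      exact Finset.mem_image.2 ⟨Y, Finset.mem_filter.2 ⟨hY, (Finset.mem_erase.1 hdA').2⟩, rfl⟩
    have hle : (famAt G d).card ≤ (famAt F d).card :=
      le_trans (Finset.card_le_card hsub) Finset.card_image_le
    have := hfail d hdU
    omega
  have hUniv := hminUniv G hucG hGne hGne' hfailG hcard
  have hsubU : famUniv G ⊆ (famUniv F).erase c := by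
    intro x hx
    obtain ⟨A, hA, hxA⟩ := mem_famUniv.1 hx
    obtain ⟨X, hX, rfl⟩ := Finset.mem_image.1 hA
    obtain ⟨hxc, hxX⟩ := Finset.mem_erase.1 hxA
    exact Finset.mem_erase.2 ⟨hxc, mem_famUniv.2 ⟨X, hX, hxX⟩⟩
  have h1U : (famUniv G).card ≤ (famUniv F).card - 1 := by
    calc (famUniv G).card ≤ ((famUniv F).erase c).card := Finset.card_le_card hsubU
    _ = (famUniv F).card - 1 := Finset.card_erase_of_mem hc
  have hpos : 0 < (famUniv F).card := Finset.card_pos.2 ⟨c, hc⟩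
  omega

theorem stmt5 (F : Finset (Finset ℕ)) (huc : unionClosed F)
    (h1 : F ≠ ∅) (h2 : F ≠ {∅}) (hfail : failsFrankl F)
    (hminCard : ∀ G : Finset (Finset ℕ), unionClosed G → G ≠ ∅ → G ≠ {∅} →
      failsFrankl G → F.card ≤ G.card)
    (hminUniv : ∀ G : Finset (Finset ℕ), unionClosed G → G ≠ ∅ → G ≠ {∅} →
      failsFrankl G → G.card = F.card → (famUniv F).card ≤ (famUniv G).card) :
    ∀ a ∈ famUniv F, 3 ≤ (F.filter (fun O => a ∉ O ∧ O ∪ {a} ∈ F)).card := by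
  intro a ha
  by_contra hk
  push_neg at hk
  set P : Finset (Finset ℕ) := F.filter (fun O => a ∉ O ∧ O ∪ {a} ∈ F) with hPdef
  have h3 := three_le_card F h1 h2 hfail
  -- P is nonempty
  obtain ⟨O₀, hO₀F, hO₀a, hO₀u⟩ := exists_problematic F huc h1 h2 hfail hminUniv a ha
  have hPne : P.Nonempty := ⟨O₀, Finset.mem_filter.2 ⟨hO₀F, hO₀a, hO₀u⟩⟩
  -- P is union-closed
  have hPsup : ∀ X ∈ P, ∀ Y ∈ P, X ∪ Y ∈ P := by
    intro X hX Y hY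
    obtain ⟨hXF, hXa, hXu⟩ := Finset.mem_filter.1 hX
    obtain ⟨hYF, hYa, hYu⟩ := Finset.mem_filter.1 hY
    refine Finset.mem_filter.2 ⟨huc X hXF Y hYF, ?_, ?_⟩
    · simp only [Finset.mem_union]
      tauto
    · have : X ∪ Y ∪ {a} = X ∪ (Y ∪ {a}) := Finset.union_assoc X Y {a}
      rw [this]
      exact huc X hXF (Y ∪ {a}) hYu
  -- maximum element of P
  set O : Finset ℕ := P.sup' hPne id with hOdef
  have hOP : O ∈ P := by
    apply Finset.sup'_induction hPne id (p := fun Z => Z ∈ P)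
    · intro x hx y hy
      exact hPsup x hx y hy
    · intro b hb
      exact hb
  obtain ⟨hOF, hOa, hOu⟩ := Finset.mem_filter.1 hOP
  have hle_O : ∀ X ∈ P, X ⊆ O := by
    intro X hX
    exact Finset.le_sup' id hX
  -- every set avoiding a is contained in O
  have hmax : ∀ X ∈ F, a ∉ X → X ⊆ O := by
    intro X hX haX
    have hXO : X ∪ O ∈ P := by
      refine Finset.mem_filter.2 ⟨huc X hX O hOF, ?_, ?_⟩
      · simp only [Finset.mem_union]
        tauto
      · have : X ∪ O ∪ {a} = X ∪ (O ∪ {a}) := Finset.union_assoc X O {a}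
        rw [this]
        exact huc X hX (O ∪ {a}) hOu
    exact subset_trans Finset.subset_union_left (hle_O _ hXO)
  -- the deletion family
  set f : Finset ℕ → Finset ℕ := fun X => X.erase a with hf
  set G : Finset (Finset ℕ) := F.image f with hG
  -- lower bound on |G|
  set D : Finset (Finset ℕ) := P.image (fun O => O ∪ {a}) with hD
  have hDcard : D.card ≤ 2 := le_trans Finset.card_image_le (by omega)
  have hinj : Set.InjOn f ↑(F \ D) := by
    intro X hX Y hY hXY
    simp only [Finset.coe_sdiff, Set.mem_diff, Finset.mem_coe] at hX hY
    simp only [hf] at hXY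
    by_cases haX : a ∈ X <;> by_cases haY : a ∈ Y
    · have : insert a (X.erase a) = insert a (Y.erase a) := by rw [hXY]
      rwa [Finset.insert_erase haX, Finset.insert_erase haY] at this
    · exfalso
      have hYe : Y.erase a = Y := Finset.erase_eq_of_notMem haY
      have hXY' : X = Y ∪ {a} := by
        rw [union_singleton_eq_insert, ← hYe, ← hXY, Finset.insert_erase haX]
      have hYP : Y ∈ P := Finset.mem_filter.2 ⟨hY.1, haY, hXY' ▸ hX.1⟩
      exact hX.2 (Finset.mem_image.2 ⟨Y, hYP, hXY'.symm⟩)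
    · exfalso
      have hXe : X.erase a = X := Finset.erase_eq_of_notMem haX
      have hYX' : Y = X ∪ {a} := by
        rw [union_singleton_eq_insert, ← hXe, hXY, Finset.insert_erase haY]
      have hXP : X ∈ P := Finset.mem_filter.2 ⟨hX.1, haX, hYX' ▸ hY.1⟩
      exact hY.2 (Finset.mem_image.2 ⟨X, hXP, hYX'.symm⟩)
    · rw [← Finset.erase_eq_of_notMem haX, ← Finset.erase_eq_of_notMem haY]
      exact hXY
  have hlow : F.card - 2 ≤ G.card := by
    have h1' : (F \ D).card = ((F \ D).image f).card := (Finset.card_image_of_injOn hinj).symm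
    have h2' : (F \ D).image f ⊆ G := Finset.image_subset_image (Finset.sdiff_subset)
    have h3' : F.card - D.card ≤ (F \ D).card := Finset.le_card_sdiff D F
    have h4' := Finset.card_le_card h2'
    omega
  -- upper bound on |G|
  have hup : G.card ≤ F.card - 1 := by
    have hOu' : O ∪ {a} ∈ F := hOu
    have hGeq : G = (F.erase (O ∪ {a})).image f := by
      apply Finset.Subset.antisymm
      · intro A hA
        obtain ⟨X, hX, rfl⟩ := Finset.mem_image.1 hA
        by_cases hXO : X = O ∪ {a}
        · subst hXO
          refine Finset.mem_image.2 ⟨O, Finset.mem_erase.2 ⟨?_, hOF⟩, ?_⟩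
          · intro h
            apply hOa
            rw [h]
            simp
          · simp only [hf]
            rw [union_singleton_eq_insert, Finset.erase_insert hOa,
              Finset.erase_eq_of_notMem hOa]
        · exact Finset.mem_image.2 ⟨X, Finset.mem_erase.2 ⟨hXO, hX⟩, rfl⟩
      · exact Finset.image_subset_image (Finset.erase_subset _ _)
    calc G.card = ((F.erase (O ∪ {a})).image f).card := by rw [hGeq]
    _ ≤ (F.erase (O ∪ {a})).card := Finset.card_image_le
    _ = F.card - 1 := Finset.card_erase_of_mem hOu'
  -- G is a valid family
  have hucG : unionClosed G := by
    intro A hA B hB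
    obtain ⟨X, hX, rfl⟩ := Finset.mem_image.1 hA
    obtain ⟨Y, hY, rfl⟩ := Finset.mem_image.1 hB
    refine Finset.mem_image.2 ⟨X ∪ Y, huc X hX Y hY, ?_⟩
    simp [hf, Finset.erase_union_distrib]
  have hGne : G ≠ ∅ := by
    intro h
    obtain ⟨X, hX⟩ := Finset.nonempty_iff_ne_empty.2 h1
    have : f X ∈ G := Finset.mem_image.2 ⟨X, hX, rfl⟩
    rw [h] at this
    exact absurd this (Finset.notMem_empty _)
  have hGne' : G ≠ {∅} := by
    intro h
    have hsub : F ⊆ {∅, {a}} := by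
      intro X hX
      have hfX : f X ∈ G := Finset.mem_image.2 ⟨X, hX, rfl⟩
      rw [h, Finset.mem_singleton] at hfX
      have := (Finset.erase_eq_empty_iff X a).1 hfX
      rcases this with h' | h' <;> simp [h']
    have hcard2 : ({∅, {a}} : Finset (Finset ℕ)).card ≤ 2 := by
      apply le_trans (Finset.card_insert_le _ _)
      simp
    have := Finset.card_le_card hsub
    omega
  -- G cannot fail Frankl
  have hGnotfail : ¬ failsFrankl G := by
    intro hfG
    have := hminCard G hucG hGne hGne' hfG
    omega
  -- so there is a witness b
  rw [failsFrankl] at hGnotfail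
  push_neg at hGnotfail
  obtain ⟨b, hbG, hb2⟩ := hGnotfail
  obtain ⟨A, hA, hbA⟩ := mem_famUniv.1 hbG
  obtain ⟨X₀, hX₀, rfl⟩ := Finset.mem_image.1 hA
  have hba : b ≠ a := (Finset.mem_erase.1 hbA).1
  have hbU : b ∈ famUniv F := mem_famUniv.2 ⟨X₀, hX₀, (Finset.mem_erase.1 hbA).2⟩
  -- |G_b| ≤ |F_b|
  have hGbsub : famAt G b ⊆ Finset.image f (famAt F b) := by
    intro A hA'
    obtain ⟨hAG, hbA'⟩ := Finset.mem_filter.1 hA'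
    obtain ⟨Y, hY, rfl⟩ := Finset.mem_image.1 hAG
    exact Finset.mem_image.2 ⟨Y, Finset.mem_filter.2 ⟨hY, (Finset.mem_erase.1 hbA').2⟩, rfl⟩
  have hGb_le : (famAt G b).card ≤ (famAt F b).card :=
    le_trans (Finset.card_le_card hGbsub) Finset.card_image_le
  -- b ∉ O
  have hbO : b ∉ O := by
    intro hbO
    -- then famAt G b ⊆ image f ((famAt F b).erase (O ∪ {a}))
    have hsub2 : famAt G b ⊆ Finset.image f ((famAt F b).erase (O ∪ {a})) := by
      intro A hA'
      obtain ⟨hAG, hbA'⟩ := Finset.mem_filter.1 hA'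
      obtain ⟨Y, hY, rfl⟩ := Finset.mem_image.1 hAG
      have hbY : b ∈ Y := (Finset.mem_erase.1 hbA').2
      by_cases hYO : Y = O ∪ {a}
      · subst hYO
        refine Finset.mem_image.2 ⟨O, Finset.mem_erase.2 ⟨?_, Finset.mem_filter.2 ⟨hOF, hbO⟩⟩, ?_⟩
        · intro h
          apply hOa
          rw [h]
          simp
        · simp only [hf]
          rw [union_singleton_eq_insert, Finset.erase_insert hOa,
            Finset.erase_eq_of_notMem hOa]
      · exact Finset.mem_image.2 ⟨Y, Finset.mem_erase.2 ⟨hYO, Finset.mem_filter.2 ⟨hY, hbY⟩⟩, rfl⟩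
    have hOinFb : O ∪ {a} ∈ famAt F b := by
      refine Finset.mem_filter.2 ⟨hOu, ?_⟩
      simp only [Finset.mem_union]
      tauto
    have hcardGb : (famAt G b).card ≤ (famAt F b).card - 1 := by
      calc (famAt G b).card ≤ (((famAt F b).erase (O ∪ {a})).image f).card :=
            Finset.card_le_card hsub2
      _ ≤ ((famAt F b).erase (O ∪ {a})).card := Finset.card_image_le
      _ = (famAt F b).card - 1 := Finset.card_erase_of_mem hOinFb
    have hfb := hfail b hbU
    have hOpos : 0 < (famAt F b).card := Finset.card_pos.2 ⟨O ∪ {a}, hOinFb⟩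
    omega
  -- F_b ⊆ F_a
  have hFbFa : famAt F b ⊆ famAt F a := by
    intro X hX
    obtain ⟨hXF, hbX⟩ := Finset.mem_filter.1 hX
    by_cases haX : a ∈ X
    · exact Finset.mem_filter.2 ⟨hXF, haX⟩
    · exact absurd (hmax X hXF haX hbX) hbO
  -- counting forces equality
  have hfa := hfail a ha
  have hfb := hfail b hbU
  have hble : (famAt F b).card ≤ (famAt F a).card := Finset.card_le_card hFbFa
  have heqcard : (famAt F a).card ≤ (famAt F b).card := by omega
  have hFeq : famAt F b = famAt F a := Finset.eq_of_subset_of_card_le hFbFa heqcard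
  -- b has no problematic set: contradiction
  obtain ⟨Q, hQF, hbQ, hQu⟩ := exists_problematic F huc h1 h2 hfail hminUniv b hbU
  have hQb : Q ∪ {b} ∈ famAt F b := by
    refine Finset.mem_filter.2 ⟨hQu, ?_⟩
    simp
  rw [hFeq] at hQb
  have haQb : a ∈ Q ∪ {b} := (Finset.mem_filter.1 hQb).2
  have haQ : a ∈ Q := by
    rcases Finset.mem_union.1 haQb with h | h
    · exact h
    · exact absurd (Finset.mem_singleton.1 h).symm hba
  have hQa : Q ∈ famAt F a := Finset.mem_filter.2 ⟨hQF, haQ⟩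
  rw [← hFeq] at hQa
  exact hbQ (Finset.mem_filter.1 hQa).2
end

section
/- A finite supratopological space (X, 𝓕) is T_FF if and only if every subset S ⊆ X is open or closed (i.e. S ∈ 𝓕 or X \ S ∈ 𝓕). -/
variable {α : Type*} [DecidableEq α]

/-- `(X, 𝓕)` is a (finite) supratopological space: every open set is a subset of `X`,
`𝓕` is union-closed, and `∅, X ∈ 𝓕`. -/
def suprat (X : Finset α) (F : Finset (Finset α)) : Prop :=
  (∀ O ∈ F, O ⊆ X) ∧ (∀ A ∈ F, ∀ B ∈ F, A ∪ B ∈ F) ∧ ∅ ∈ F ∧ X ∈ F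

/-- `(X, 𝓕)` is `T_FF`: for any pair of disjoint subsets `S₁, S₂ ⊆ X` there is an open
set `O` with either `S₁ ⊆ O` and `S₂ ∩ O = ∅`, or `S₂ ⊆ O` and `S₁ ∩ O = ∅`. -/
def T_FF (X : Finset α) (F : Finset (Finset α)) : Prop :=
  ∀ S₁ ⊆ X, ∀ S₂ ⊆ X, Disjoint S₁ S₂ →
    ∃ O ∈ F, (S₁ ⊆ O ∧ S₂ ∩ O = ∅) ∨ (S₂ ⊆ O ∧ S₁ ∩ O = ∅)

theorem stmt8 (X : Finset α) (F : Finset (Finset α)) (hsup : suprat X F) :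
    T_FF X F ↔ ∀ S ⊆ X, S ∈ F ∨ X \ S ∈ F := by
  obtain ⟨hsub, -, -, -⟩ := hsup
  constructor
  · intro h S hS
    obtain ⟨O, hO, hc⟩ := h S hS (X \ S) (Finset.sdiff_subset) Finset.disjoint_sdiff
    rcases hc with ⟨h1, h2⟩ | ⟨h1, h2⟩
    · left
      have : O = S := by
        apply Finset.Subset.antisymm _ h1
        intro x hx
        by_contra hxS
        have : x ∈ (X \ S) ∩ O := Finset.mem_inter.2 ⟨Finset.mem_sdiff.2 ⟨hsub O hO hx, hxS⟩, hx⟩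
        simp [h2] at this
      exact this ▸ hO
    · right
      have : O = X \ S := by
        apply Finset.Subset.antisymm _ h1
        intro x hx
        refine Finset.mem_sdiff.2 ⟨hsub O hO hx, fun hxS => ?_⟩
        have : x ∈ S ∩ O := Finset.mem_inter.2 ⟨hxS, hx⟩
        simp [h2] at this
      exact this ▸ hO
  · intro h S₁ h₁ S₂ h₂ hd
    rcases h S₁ h₁ with hF | hF
    · exact ⟨S₁, hF, Or.inl ⟨le_refl _, Finset.disjoint_iff_inter_eq_empty.1 hd.symm⟩⟩
    · refine ⟨X \ S₁, hF, Or.inr ⟨fun x hx => Finset.mem_sdiff.2 ⟨h₂ hx, fun hx1 => ?_⟩,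
        by simp [Finset.inter_sdiff_self]⟩⟩
      exact (Finset.disjoint_left.1 hd hx1) hx
end

section
/- Let 𝓕 be a finite union-closed family of finite sets with U(𝓕) = [m], and let 𝓖 ⊆ 𝓕 be a generating subfamily of 𝓕. Then |𝓖*| = |𝓕| + 1 − ε_𝓕, where ε_𝓕 = 1 if ∅ ∈ 𝓕 and ε_𝓕 = 0 otherwise. In particular, 𝓕* is a normalized family. -/
/-- `𝓕` is separating if `𝓕_a ≠ 𝓕_b` for all distinct `a, b ∈ U(𝓕)`. -/
def separating (F : Finset (Finset ℕ)) : Prop :=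
  ∀ a ∈ famUniv F, ∀ b ∈ famUniv F, a ≠ b → famAt F a ≠ famAt F b

/-- `𝓕` is normalized: separating, union-closed, `∅ ∈ 𝓕` and `|𝓕| = |U(𝓕)| + 1`. -/
def normalized (F : Finset (Finset ℕ)) : Prop :=
  separating F ∧ unionClosed F ∧ ∅ ∈ F ∧ F.card = (famUniv F).card + 1

/-- `𝓖` is a generating subfamily of `𝓕`: `𝓖 ⊆ 𝓕` and every member of `𝓕` is a union
of members of `𝓖` (the empty union giving `∅`). -/
def generates (G F : Finset (Finset ℕ)) : Prop :=
  G ⊆ F ∧ ∀ X ∈ F, ∃ T ⊆ G, X = T.sup id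

/-- The union-closed family generated by `𝓖`: all unions of subfamilies of `𝓖`
(including the empty union `∅`). -/
def gen (G : Finset (Finset ℕ)) : Finset (Finset ℕ) :=
  G.powerset.image (fun T => T.sup id)

/-- `J(𝓕)`: the non-empty irreducible members of `𝓕`. -/
def J (F : Finset (Finset ℕ)) : Finset (Finset ℕ) :=
  F.filter (fun I => I ≠ ∅ ∧ ∀ A ∈ F, ∀ B ∈ F, I = A ∪ B → A = I ∨ B = I)

/-- `H : ℕ → Finset ℕ` is an indexing `H_1, …, H_s` of `𝓛 \ {∅}`. -/
def isIndexing (L : Finset (Finset ℕ)) (s : ℕ) (H : ℕ → Finset ℕ) : Prop :=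
  Set.InjOn H (Finset.Icc 1 s) ∧ (Finset.Icc 1 s).image H = L.erase ∅

/-- `𝓗^{ι_j} = {i ∈ [s] : j ∈ H_i}`. -/
def iota (s : ℕ) (H : ℕ → Finset ℕ) (j : ℕ) : Finset ℕ :=
  (Finset.Icc 1 s).filter (fun i => j ∈ H i)

/-- The dual family: the union-closed family (containing `∅`) generated by
`{𝓗^{ι_1}, …, 𝓗^{ι_m}}`, where `H` indexes `𝓛 \ {∅}` as `H_1, …, H_s` and `U(𝓛) = [m]`. -/
def dualFam (m s : ℕ) (H : ℕ → Finset ℕ) : Finset (Finset ℕ) :=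
  gen ((Finset.Icc 1 m).image (iota s H))

open Finset

def theta (s : ℕ) (H : ℕ → Finset ℕ) (Y : Finset ℕ) : Finset ℕ :=
  (Finset.Icc 1 s).filter (fun i => ¬ H i ⊆ Y)

lemma mem_gen {G : Finset (Finset ℕ)} {X : Finset ℕ} :
    X ∈ gen G ↔ ∃ T ⊆ G, X = T.sup id := by
  simp [gen, mem_image, mem_powerset, eq_comm]

lemma sup_mem_of_uc (F : Finset (Finset ℕ)) (huc : unionClosed F) :
    ∀ T : Finset (Finset ℕ), T ⊆ F → T.Nonempty → T.sup id ∈ F := by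
  intro T
  induction T using Finset.induction_on with
  | empty => intro _ h; simp at h
  | @insert A U hA ih =>
    intro hsub _
    rcases U.eq_empty_or_nonempty with rfl | hne
    · simpa using hsub (mem_insert_self A ∅)
    · have h1 : A ∈ F := hsub (mem_insert_self A U)
      have h2 : U.sup id ∈ F := ih (fun x hx => hsub (mem_insert_of_mem hx)) hne
      have := huc A h1 (U.sup id) h2
      simpa [Finset.sup_insert] using this

lemma gen_eq {F G : Finset (Finset ℕ)} (huc : unionClosed F) (hgen : generates G F) :
    gen G = insert ∅ F := by
  ext X
  rw [mem_gen, mem_insert]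
  constructor
  · rintro ⟨T, hT, rfl⟩
    rcases T.eq_empty_or_nonempty with rfl | hne
    · left; simp
    · right; exact sup_mem_of_uc F huc T (hT.trans hgen.1) hne
  · rintro (rfl | hX)
    · exact ⟨∅, empty_subset _, by simp⟩
    · exact hgen.2 X hX

lemma mem_dualFam {m s : ℕ} {H : ℕ → Finset ℕ} {V : Finset ℕ} :
    V ∈ dualFam m s H ↔ ∃ J ⊆ Finset.Icc 1 m,
      V = (Finset.Icc 1 s).filter (fun i => ∃ j ∈ J, j ∈ H i) := by
  rw [dualFam, mem_gen]
  constructor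
  · rintro ⟨T, hT, rfl⟩
    refine ⟨(Finset.Icc 1 m).filter (fun j => iota s H j ∈ T), filter_subset _ _, ?_⟩
    ext i
    simp only [Finset.mem_sup, mem_filter, id]
    constructor
    · rintro ⟨A, hAT, hiA⟩
      obtain ⟨j, hj, rfl⟩ := mem_image.1 (hT hAT)
      have hi := mem_filter.1 hiA
      exact ⟨hi.1, j, ⟨hj, hAT⟩, (mem_filter.1 hiA).2⟩
    · rintro ⟨his, j, ⟨⟨hjm, hjT⟩, hjH⟩⟩
      exact ⟨iota s H j, hjT, mem_filter.2 ⟨his, hjH⟩⟩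
  · rintro ⟨J, hJ, rfl⟩
    refine ⟨J.image (iota s H), image_subset_image hJ, ?_⟩
    rw [Finset.sup_image]
    ext i
    simp only [Finset.mem_sup, mem_filter, Function.comp, iota, id]
    constructor
    · rintro ⟨his, j, hjJ, hjH⟩
      exact ⟨j, hjJ, his, hjH⟩
    · rintro ⟨j, hjJ, hi⟩
      exact ⟨hi.1, j, hjJ, hi.2⟩

section main
variable {m s : ℕ} {F G : Finset (Finset ℕ)} {H : ℕ → Finset ℕ}

lemma H_mem (hH : isIndexing G s H) {i : ℕ} (hi : i ∈ Finset.Icc 1 s) :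
    H i ∈ G.erase ∅ := hH.2 ▸ mem_image_of_mem H hi

lemma H_sub (huc : unionClosed F) (hU : famUniv F = Finset.Icc 1 m)
    (hgen : generates G F) (hH : isIndexing G s H) {i : ℕ} (hi : i ∈ Finset.Icc 1 s) :
    H i ⊆ Finset.Icc 1 m := by
  have h1 : H i ∈ F := hgen.1 (mem_of_mem_erase (H_mem hH hi))
  calc H i ⊆ famUniv F := Finset.le_sup (f := id) h1
  _ = Finset.Icc 1 m := hU

lemma dual_eq (huc : unionClosed F) (hU : famUniv F = Finset.Icc 1 m)
    (hgen : generates G F) (hH : isIndexing G s H) :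
    dualFam m s H = (gen G).image (theta s H) := by
  ext V
  rw [mem_dualFam, mem_image]
  constructor
  · rintro ⟨J, hJ, rfl⟩
    set S := (Finset.Icc 1 s).filter (fun i => ∀ j ∈ J, j ∉ H i) with hS
    refine ⟨(S.image H).sup id, mem_gen.2 ⟨S.image H, ?_, rfl⟩, ?_⟩
    · intro A hA
      obtain ⟨i, hi, rfl⟩ := mem_image.1 hA
      exact mem_of_mem_erase (H_mem hH (mem_filter.1 hi).1)
    · ext i
      simp only [theta, mem_filter]
      refine and_congr_right fun his => ?_
      constructor
      · intro hns
        by_contra hc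
        push_neg at hc
        exact hns (Finset.le_sup (f := id) (mem_image_of_mem H (mem_filter.2 ⟨his, hc⟩)))
      · rintro ⟨j, hjJ, hjH⟩ hsub
        have hjY := hsub hjH
        obtain ⟨A, hA, hjA⟩ := Finset.mem_sup.1 hjY
        obtain ⟨k, hk, rfl⟩ := mem_image.1 hA
        exact (mem_filter.1 hk).2 j hjJ hjA
  · rintro ⟨Y, hY, rfl⟩
    refine ⟨(Finset.Icc 1 m).filter (fun j => j ∉ Y), filter_subset _ _, ?_⟩
    ext i
    simp only [theta, mem_filter]
    refine and_congr_right fun his => ?_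
    rw [Finset.not_subset]
    constructor
    · rintro ⟨j, hjH, hjY⟩
      exact ⟨j, ⟨H_sub huc hU hgen hH his hjH, hjY⟩, hjH⟩
    · rintro ⟨j, ⟨_, hjY⟩, hjH⟩
      exact ⟨j, hjH, hjY⟩

lemma gen_rep (hH : isIndexing G s H) {Y : Finset ℕ} (hY : Y ∈ gen G) :
    Y = (((Finset.Icc 1 s).filter (fun i => H i ⊆ Y)).image H).sup id := by
  obtain ⟨T, hT, rfl⟩ := mem_gen.1 hY
  apply le_antisymm
  · intro x hx
    obtain ⟨A, hAT, hxA⟩ := Finset.mem_sup.1 hx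
    have hAne : A ≠ ∅ := by rintro rfl; exact absurd hxA (by simp)
    have : A ∈ G.erase ∅ := mem_erase.2 ⟨hAne, hT hAT⟩
    rw [← hH.2] at this
    obtain ⟨i, hi, hHi⟩ := mem_image.1 this
    have hsub : H i ⊆ T.sup id := hHi ▸ Finset.le_sup (f := id) hAT
    exact Finset.mem_sup.2 ⟨H i, mem_image_of_mem H (mem_filter.2 ⟨hi, hsub⟩),
      hHi ▸ hxA⟩
  · apply Finset.sup_le
    intro A hA
    obtain ⟨i, hi, rfl⟩ := mem_image.1 hA
    exact (mem_filter.1 hi).2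

lemma theta_injOn (hH : isIndexing G s H) :
    Set.InjOn (theta s H) (gen G : Set (Finset ℕ)) := by
  intro Y1 h1 Y2 h2 heq
  have key : ∀ i ∈ Finset.Icc 1 s, (H i ⊆ Y1 ↔ H i ⊆ Y2) := by
    intro i hi
    constructor
    · intro h
      by_contra hc
      have : i ∈ theta s H Y2 := mem_filter.2 ⟨hi, hc⟩
      rw [← heq] at this
      exact (mem_filter.1 this).2 h
    · intro h
      by_contra hc
      have : i ∈ theta s H Y1 := mem_filter.2 ⟨hi, hc⟩
      rw [heq] at this
      exact (mem_filter.1 this).2 h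
  rw [gen_rep hH h1, gen_rep hH h2]
  congr 1
  congr 1
  exact filter_congr key

lemma card_dual (huc : unionClosed F) (hU : famUniv F = Finset.Icc 1 m)
    (hgen : generates G F) (hH : isIndexing G s H) :
    (dualFam m s H).card = F.card + 1 - (if ∅ ∈ F then 1 else 0) := by
  rw [dual_eq huc hU hgen hH, Finset.card_image_of_injOn (theta_injOn hH),
    gen_eq huc hgen]
  by_cases h : ∅ ∈ F
  · rw [insert_eq_self.2 h, if_pos h]
    have : 1 ≤ F.card := card_pos.2 ⟨∅, h⟩
    omega
  · rw [card_insert_of_notMem h, if_neg h]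
    omega

end main

lemma gen_uc (G : Finset (Finset ℕ)) : unionClosed (gen G) := by
  intro A hA B hB
  obtain ⟨T1, h1, rfl⟩ := mem_gen.1 hA
  obtain ⟨T2, h2, rfl⟩ := mem_gen.1 hB
  exact mem_gen.2 ⟨T1 ∪ T2, union_subset h1 h2,
    by simp [Finset.sup_union, Finset.sup_eq_union]⟩

lemma empty_mem_gen (G : Finset (Finset ℕ)) : ∅ ∈ gen G :=
  mem_gen.2 ⟨∅, empty_subset _, by simp⟩

lemma generates_self (F : Finset (Finset ℕ)) : generates F F :=
  ⟨subset_rfl, fun X hX => ⟨{X}, singleton_subset_iff.2 hX, by simp⟩⟩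

section main2
variable {m s : ℕ} {F G : Finset (Finset ℕ)} {H : ℕ → Finset ℕ}

lemma famUniv_dual (huc : unionClosed F) (hU : famUniv F = Finset.Icc 1 m)
    (hgen : generates G F) (hH : isIndexing G s H) :
    famUniv (dualFam m s H) = Finset.Icc 1 s := by
  apply le_antisymm
  · apply Finset.sup_le
    intro V hV
    obtain ⟨J, _, rfl⟩ := mem_dualFam.1 hV
    exact filter_subset _ _
  · intro i hi
    have hHi := H_mem hH hi
    have hne : (H i).Nonempty := nonempty_iff_ne_empty.2 (mem_erase.1 hHi).1
    obtain ⟨j, hj⟩ := hne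
    have hjm : j ∈ Finset.Icc 1 m := H_sub huc hU hgen hH hi hj
    have hV : (Finset.Icc 1 s).filter (fun i' => ∃ j' ∈ ({j} : Finset ℕ), j' ∈ H i')
        ∈ dualFam m s H :=
      mem_dualFam.2 ⟨{j}, singleton_subset_iff.2 hjm, rfl⟩
    exact Finset.mem_sup.2 ⟨_, hV, mem_filter.2 ⟨hi, j, mem_singleton_self j, hj⟩⟩

lemma dual_sep (huc : unionClosed F) (hU : famUniv F = Finset.Icc 1 m)
    (hH : isIndexing F s H) : separating (dualFam m s H) := by
  have hgen := generates_self F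
  have hfu := famUniv_dual huc hU hgen hH
  have key : ∀ a b : ℕ, a ∈ Finset.Icc 1 s → b ∈ Finset.Icc 1 s →
      famAt (dualFam m s H) a = famAt (dualFam m s H) b → H b ⊆ H a := by
    intro a b ha hb h
    have hYgen : H a ∈ gen F := mem_gen.2 ⟨{H a},
      singleton_subset_iff.2 (mem_of_mem_erase (H_mem hH ha)), by simp⟩
    have hθD : theta s H (H a) ∈ dualFam m s H := by
      rw [dual_eq huc hU hgen hH]
      exact mem_image_of_mem _ hYgen
    have hna : a ∉ theta s H (H a) := fun hc => (mem_filter.1 hc).2 subset_rfl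
    have h1 : theta s H (H a) ∉ famAt (dualFam m s H) a :=
      fun hc => hna (mem_filter.1 hc).2
    rw [h] at h1
    have hnb : b ∉ theta s H (H a) :=
      fun hc => h1 (mem_filter.2 ⟨hθD, hc⟩)
    by_contra hc'
    exact hnb (mem_filter.2 ⟨hb, hc'⟩)
  intro a ha b hb hab heq
  rw [hfu] at ha hb
  exact hab (hH.1 (by exact_mod_cast ha) (by exact_mod_cast hb)
    (le_antisymm (key b a hb ha heq.symm) (key a b ha hb heq)))

lemma dual_normalized (huc : unionClosed F) (hU : famUniv F = Finset.Icc 1 m)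
    (hH : isIndexing F s H) : normalized (dualFam m s H) := by
  have hgen := generates_self F
  refine ⟨dual_sep huc hU hH, ?_, ?_, ?_⟩
  · exact gen_uc _
  · exact empty_mem_gen _
  · rw [card_dual huc hU hgen hH, famUniv_dual huc hU hgen hH, Nat.card_Icc]
    have hs : s = (F.erase ∅).card := by
      rw [← hH.2, Finset.card_image_of_injOn hH.1, Nat.card_Icc]; omega
    by_cases h : ∅ ∈ F
    · rw [if_pos h]
      rw [card_erase_of_mem h] at hs
      have : 1 ≤ F.card := card_pos.2 ⟨∅, h⟩
      omega
    · rw [if_neg h]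
      rw [erase_eq_of_notMem h] at hs
      omega

end main2


theorem stmt10 (m s t : ℕ) (F G : Finset (Finset ℕ)) (huc : unionClosed F)
    (hU : famUniv F = Finset.Icc 1 m) (hgen : generates G F)
    (HG : ℕ → Finset ℕ) (hHG : isIndexing G s HG)
    (HF : ℕ → Finset ℕ) (hHF : isIndexing F t HF) :
    (dualFam m s HG).card = F.card + 1 - (if ∅ ∈ F then 1 else 0) ∧
      normalized (dualFam m t HF) := by
  exact ⟨card_dual huc hU hgen hHG, dual_normalized huc hU hHF⟩
end

section
/- Up to a bijection of the universe, the only independent n-normalized family is the staircase family {∅, [1], [2], …, [n]}, where [k] = {1, …, k}. -/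
/-- The `n`-staircase family `{∅, [1], …, [n]}`, where `[k] = {1, …, k}`. -/
def staircase (n : ℕ) : Finset (Finset ℕ) :=
  (Finset.range (n + 1)).image (fun k => Finset.Icc 1 k)

/- ### Auxiliary lemmas -/

lemma famUniv_staircase (n : ℕ) : famUniv (staircase n) = Finset.Icc 1 n := by
  ext x
  simp only [famUniv, staircase, Finset.mem_sup, Finset.mem_image, Finset.mem_range, id]
  constructor
  · rintro ⟨v, ⟨k, hk, rfl⟩, hx⟩
    rw [Finset.mem_Icc] at hx ⊢
    omega
  · intro hx
    rw [Finset.mem_Icc] at hx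
    exact ⟨Finset.Icc 1 n, ⟨n, by omega, rfl⟩, Finset.mem_Icc.mpr hx⟩

lemma Icc_mem_staircase {n k : ℕ} (hk : k ≤ n) : Finset.Icc 1 k ∈ staircase n := by
  exact Finset.mem_image.mpr ⟨k, Finset.mem_range.mpr (by omega), rfl⟩

lemma staircase_sep_aux {n a b : ℕ} (ha : a ∈ Finset.Icc 1 n) (hb : b ∈ Finset.Icc 1 n)
    (hlt : a < b) : famAt (staircase n) a ≠ famAt (staircase n) b := by
  rw [Finset.mem_Icc] at ha hb
  intro h
  have hmem : Finset.Icc 1 a ∈ famAt (staircase n) a :=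
    Finset.mem_filter.mpr ⟨Icc_mem_staircase (by omega), Finset.mem_Icc.mpr (by omega)⟩
  rw [h] at hmem
  have := (Finset.mem_filter.mp hmem).2
  rw [Finset.mem_Icc] at this
  omega

lemma staircase_card (n : ℕ) : (staircase n).card = n + 1 := by
  rw [staircase, Finset.card_image_of_injOn, Finset.card_range]
  intro k _ l _ h
  have := congrArg Finset.card h
  simp only [Nat.card_Icc] at this
  omega

lemma staircase_normalized (n : ℕ) : normalized (staircase n) := by
  refine ⟨?_, ?_, ?_, ?_⟩
  · intro a ha b hb hne
    rw [famUniv_staircase] at ha hb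
    rcases hne.lt_or_gt with h | h
    · exact staircase_sep_aux ha hb h
    · exact (staircase_sep_aux hb ha h).symm
  · intro A hA B hB
    obtain ⟨k, hk, rfl⟩ := Finset.mem_image.mp hA
    obtain ⟨l, hl, rfl⟩ := Finset.mem_image.mp hB
    have : Finset.Icc 1 k ∪ Finset.Icc 1 l = Finset.Icc 1 (max k l) := by
      ext x; simp only [Finset.mem_union, Finset.mem_Icc]; omega
    rw [this]
    rw [Finset.mem_range] at hk hl
    exact Icc_mem_staircase (by omega)
  · have : (∅ : Finset ℕ) = Finset.Icc 1 0 := by simp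
    rw [this]
    exact Icc_mem_staircase (by omega)
  · rw [staircase_card, famUniv_staircase, Nat.card_Icc]
    omega

lemma staircase_independent (n : ℕ) : independent (staircase n) := by
  intro a ha S hS
  rw [famUniv_staircase, Finset.mem_Icc] at ha
  rw [famUniv_staircase] at hS
  by_cases h : ∃ s ∈ S, s < a
  · obtain ⟨s, hs, hlt⟩ := h
    have hs' := hS hs
    rw [Finset.mem_sdiff, Finset.mem_Icc] at hs'
    left
    refine ⟨Finset.Icc 1 (a - 1), Icc_mem_staircase (by omega), ?_, ⟨s, ?_⟩⟩
    · rw [Finset.mem_Icc]; omega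
    · rw [Finset.mem_inter, Finset.mem_Icc]
      exact ⟨⟨by omega, by omega⟩, hs⟩
  · push_neg at h
    right
    refine ⟨Finset.Icc 1 a, Icc_mem_staircase (by omega), Finset.mem_Icc.mpr (by omega), ?_⟩
    rw [Finset.eq_empty_iff_forall_notMem]
    intro x hx
    rw [Finset.mem_inter, Finset.mem_Icc] at hx
    have h1 := h x hx.2
    have h2 := hS hx.2
    rw [Finset.mem_sdiff, Finset.mem_singleton] at h2
    omega

/-- The union of all members of `F` avoiding `a`. -/
def cmap (F : Finset (Finset ℕ)) (a : ℕ) : Finset ℕ :=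
  (F.filter (fun O => a ∉ O)).sup id

lemma sup_mem_of_unionClosed {F G : Finset (Finset ℕ)} (hUC : unionClosed F) (h0 : ∅ ∈ F)
    (hG : G ⊆ F) : G.sup id ∈ F := by
  classical
  induction G using Finset.induction_on with
  | empty => simpa using h0
  | @insert A G _hA ih =>
    rw [Finset.sup_insert]
    have h1 : A ∈ F := hG (Finset.mem_insert_self _ _)
    have h2 : G.sup id ∈ F := ih (fun x hx => hG (Finset.mem_insert_of_mem hx))
    have := hUC A h1 (G.sup id) h2
    simpa [Finset.sup_eq_union] using this

lemma mem_subset_famUniv {F : Finset (Finset ℕ)} {O : Finset ℕ} (hO : O ∈ F) :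
    O ⊆ famUniv F := Finset.le_sup (f := id) hO

lemma famUniv_mem {F : Finset (Finset ℕ)} (hUC : unionClosed F) (h0 : ∅ ∈ F) :
    famUniv F ∈ F := sup_mem_of_unionClosed hUC h0 (Finset.Subset.refl F)

lemma cmap_mem {F : Finset (Finset ℕ)} (hUC : unionClosed F) (h0 : ∅ ∈ F) (a : ℕ) :
    cmap F a ∈ F := sup_mem_of_unionClosed hUC h0 (Finset.filter_subset _ _)

lemma notMem_cmap {F : Finset (Finset ℕ)} {a : ℕ} : a ∉ cmap F a := by
  intro h
  rw [cmap, Finset.mem_sup] at h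
  obtain ⟨O, hO, ha⟩ := h
  exact (Finset.mem_filter.mp hO).2 ha

lemma subset_cmap {F : Finset (Finset ℕ)} {O : Finset ℕ} {a : ℕ} (hO : O ∈ F) (ha : a ∉ O) :
    O ⊆ cmap F a :=
  Finset.le_sup (f := id) (Finset.mem_filter.mpr ⟨hO, ha⟩)

lemma mem_iff_not_subset_cmap {F : Finset (Finset ℕ)} {O : Finset ℕ} {a : ℕ} (hO : O ∈ F) :
    a ∈ O ↔ ¬ O ⊆ cmap F a := by
  constructor
  · intro ha hsub
    exact notMem_cmap (hsub ha)
  · intro h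
    by_contra ha
    exact h (subset_cmap hO ha)

lemma cmap_injOn {F : Finset (Finset ℕ)} (hsep : separating F) {a b : ℕ}
    (ha : a ∈ famUniv F) (hb : b ∈ famUniv F) (h : cmap F a = cmap F b) : a = b := by
  by_contra hne
  apply hsep a ha b hb hne
  ext X
  simp only [famAt, Finset.mem_filter]
  refine and_congr_right fun hX => ?_
  rw [mem_iff_not_subset_cmap hX, mem_iff_not_subset_cmap hX, h]

lemma cmap_image {F : Finset (Finset ℕ)} (hsep : separating F) (hUC : unionClosed F)
    (h0 : ∅ ∈ F) (hcard : F.card = (famUniv F).card + 1) :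
    (famUniv F).image (cmap F) = F.erase (famUniv F) := by
  apply Finset.eq_of_subset_of_card_le
  · intro X hX
    obtain ⟨a, ha, rfl⟩ := Finset.mem_image.mp hX
    refine Finset.mem_erase.mpr ⟨?_, cmap_mem hUC h0 a⟩
    intro h
    exact notMem_cmap (h ▸ ha)
  · rw [Finset.card_erase_of_mem (famUniv_mem hUC h0), hcard,
      Finset.card_image_of_injOn (fun a ha b hb => cmap_injOn hsep ha hb)]
    omega

lemma cmap_surj {F : Finset (Finset ℕ)} (hsep : separating F) (hUC : unionClosed F)
    (h0 : ∅ ∈ F) (hcard : F.card = (famUniv F).card + 1) {X : Finset ℕ}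
    (hX : X ∈ F) (hXne : X ≠ famUniv F) : ∃ a ∈ famUniv F, cmap F a = X := by
  have : X ∈ (famUniv F).image (cmap F) := by
    rw [cmap_image hsep hUC h0 hcard]
    exact Finset.mem_erase.mpr ⟨hXne, hX⟩
  obtain ⟨a, ha, h⟩ := Finset.mem_image.mp this
  exact ⟨a, ha, h⟩

set_option maxHeartbeats 1000000 in
lemma chain_of_independent {F : Finset (Finset ℕ)} (hsep : separating F) (hUC : unionClosed F)
    (h0 : ∅ ∈ F) (hcard : F.card = (famUniv F).card + 1) (hind : independent F) :
    ∀ A ∈ F, ∀ B ∈ F, A ⊆ B ∨ B ⊆ A := by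
  intro A hA B hB
  by_contra hcon
  push_neg at hcon
  obtain ⟨hAB, hBA⟩ := hcon
  have hAne : A ≠ famUniv F := by
    rintro rfl
    exact hBA (mem_subset_famUniv hB)
  have hBne : B ≠ famUniv F := by
    rintro rfl
    exact hAB (mem_subset_famUniv hA)
  obtain ⟨sA, hsA, hcA⟩ := cmap_surj hsep hUC h0 hcard hA hAne
  obtain ⟨sB, hsB, hcB⟩ := cmap_surj hsep hUC h0 hcard hB hBne
  obtain ⟨m, hmF, hOlem, hmsub⟩ :
      ∃ m ∈ F, (∀ O ∈ F, O ⊆ A ∩ B → O ⊆ m) ∧ m ⊆ A ∩ B := by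
    refine ⟨(F.filter (fun O => O ⊆ A ∩ B)).sup id,
      sup_mem_of_unionClosed hUC h0 (Finset.filter_subset _ _), ?_, ?_⟩
    · intro O hO hsub
      rw [← Finset.le_iff_subset]
      apply Finset.le_sup (f := id)
      rw [Finset.mem_filter]
      exact ⟨hO, hsub⟩
    · rw [← Finset.le_iff_subset]
      apply Finset.sup_le
      intro O hO
      rw [Finset.mem_filter] at hO
      exact Finset.le_iff_subset.mpr hO.2
  have hmne : m ≠ famUniv F := by
    intro h
    exact hAB (((mem_subset_famUniv hA).trans (h ▸ hmsub)).trans Finset.inter_subset_right)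
  obtain ⟨a, haU, hca⟩ := cmap_surj hsep hUC h0 hcard hmF hmne
  have hmA : m ≠ A := by
    intro h
    exact hAB ((h ▸ hmsub).trans Finset.inter_subset_right)
  have hmB : m ≠ B := by
    intro h
    exact hBA ((h ▸ hmsub).trans Finset.inter_subset_left)
  have hsAa : sA ≠ a := by
    rintro rfl
    exact hmA (hca.symm.trans hcA)
  have hsBa : sB ≠ a := by
    rintro rfl
    exact hmB (hca.symm.trans hcB)
  have hS : ({sA, sB} : Finset ℕ) ⊆ famUniv F \ {a} := by
    intro x hx
    rw [Finset.mem_insert, Finset.mem_singleton] at hx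
    rw [Finset.mem_sdiff, Finset.mem_singleton]
    rcases hx with rfl | rfl
    · exact ⟨hsA, hsAa⟩
    · exact ⟨hsB, hsBa⟩
  rcases hind a haU {sA, sB} hS with ⟨O, hO, haO, hne⟩ | ⟨O, hO, haO, hdisj⟩
  · have hOm : O ⊆ m := hca ▸ subset_cmap hO haO
    have hOA : O ⊆ A := hOm.trans (hmsub.trans Finset.inter_subset_left)
    have hOB : O ⊆ B := hOm.trans (hmsub.trans Finset.inter_subset_right)
    obtain ⟨x, hx⟩ := hne
    rw [Finset.mem_inter, Finset.mem_insert, Finset.mem_singleton] at hx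
    rcases hx.2 with rfl | rfl
    · exact notMem_cmap (hcA ▸ hOA hx.1)
    · exact notMem_cmap (hcB ▸ hOB hx.1)
  · rw [Finset.eq_empty_iff_forall_notMem] at hdisj
    have hsAO : sA ∉ O := by
      intro h
      exact hdisj sA (Finset.mem_inter.mpr ⟨h, Finset.mem_insert_self _ _⟩)
    have hsBO : sB ∉ O := by
      intro h
      exact hdisj sB (Finset.mem_inter.mpr
        ⟨h, Finset.mem_insert_of_mem (Finset.mem_singleton_self _)⟩)
    have hOA : O ⊆ A := hcA ▸ subset_cmap hO hsAO
    have hOB : O ⊆ B := hcB ▸ subset_cmap hO hsBO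
    have hOm : O ⊆ m := hOlem O hO (Finset.subset_inter hOA hOB)
    exact notMem_cmap (hca ▸ hOm haO)

theorem stmt12 (n : ℕ) :
    (normalized (staircase n) ∧ independent (staircase n) ∧
      (famUniv (staircase n)).card = n) ∧
    ∀ F : Finset (Finset ℕ), normalized F → independent F → (famUniv F).card = n →
      ∃ f : ℕ → ℕ, Set.InjOn f (famUniv F) ∧
        F.image (fun X => X.image f) = staircase n := by
  constructor
  · exact ⟨staircase_normalized n, staircase_independent n,
      by rw [famUniv_staircase, Nat.card_Icc]; omega⟩
  · intro F hnorm hind hn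
    obtain ⟨hsep, hUC, h0, hcard⟩ := hnorm
    have hchain := chain_of_independent hsep hUC h0 hcard hind
    set f : ℕ → ℕ := fun a => (cmap F a).card + 1 with hf
    have hinj : Set.InjOn f (famUniv F) := by
      intro a ha b hb hfe
      rw [Finset.mem_coe] at ha hb
      have hce : (cmap F a).card = (cmap F b).card := by
        simpa [hf] using hfe
      have : cmap F a = cmap F b := by
        rcases hchain _ (cmap_mem hUC h0 a) _ (cmap_mem hUC h0 b) with h | h
        · exact Finset.eq_of_subset_of_card_le h (le_of_eq hce.symm)
        · exact (Finset.eq_of_subset_of_card_le h (le_of_eq hce)).symm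
      exact cmap_injOn hsep ha hb this
    refine ⟨f, hinj, ?_⟩
    have himg : ∀ O ∈ F, O.image f = Finset.Icc 1 O.card := by
      intro O hO
      apply Finset.eq_of_subset_of_card_le
      · intro x hx
        obtain ⟨a, haO, rfl⟩ := Finset.mem_image.mp hx
        have haU : a ∈ famUniv F := mem_subset_famUniv hO haO
        have hns : ¬ O ⊆ cmap F a := (mem_iff_not_subset_cmap hO).mp haO
        have hsub : cmap F a ⊆ O := by
          rcases hchain _ hO _ (cmap_mem hUC h0 a) with h | h
          · exact absurd h hns
          · exact h
        have hne : cmap F a ≠ O := by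
          intro h
          exact notMem_cmap (h ▸ haO)
        have hlt : (cmap F a).card < O.card :=
          Finset.card_lt_card (Finset.ssubset_iff_subset_ne.mpr ⟨hsub, hne⟩)
        rw [Finset.mem_Icc]
        simp only [hf]
        omega
      · rw [Nat.card_Icc, Finset.card_image_of_injOn]
        · omega
        · intro a ha b hb h
          exact hinj (mem_subset_famUniv hO ha) (mem_subset_famUniv hO hb) h
    have hcards : F.image Finset.card = Finset.range (n + 1) := by
      apply Finset.eq_of_subset_of_card_le
      · intro k hk
        obtain ⟨O, hO, rfl⟩ := Finset.mem_image.mp hk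
        rw [Finset.mem_range]
        have := Finset.card_le_card (mem_subset_famUniv hO)
        omega
      · rw [Finset.card_range, Finset.card_image_of_injOn]
        · omega
        · intro A hA B hB h
          rw [Finset.mem_coe] at hA hB
          rcases hchain _ hA _ hB with hs | hs
          · exact Finset.eq_of_subset_of_card_le hs (le_of_eq h.symm)
          · exact (Finset.eq_of_subset_of_card_le hs (le_of_eq h)).symm
    calc F.image (fun X => X.image f)
        = F.image (fun X => Finset.Icc 1 X.card) := Finset.image_congr himg
      _ = (F.image Finset.card).image (fun k => Finset.Icc 1 k) := by
          rw [Finset.image_image]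
          rfl
      _ = staircase n := by rw [hcards]; rfl
end

section
/- Let 𝓝 be a normalized family. Then 𝓝 = J(𝓝)** (the double dual of J(𝓝), with consistent indexings). -/
/-!
Every member of a union-closed family containing `∅` is a union of irreducible members, so `𝓝` is
generated by `J(𝓝)`. Dualising twice returns the generators: `i ∈ 𝓗^{ι_j}` iff `j ∈ H_i`, so
`𝓗^{ιι_i} = H_i` as soon as `H_i` lies in the universe `[n]`. Hence `J(𝓝)** = gen J(𝓝) = 𝓝`.
-/

lemma sup_mem_of_unionClosed_s13 {N : Finset (Finset ℕ)} (huc : unionClosed N) (hempty : ∅ ∈ N)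
    {T : Finset (Finset ℕ)} (hT : T ⊆ N) : T.sup id ∈ N := by
  rcases T.eq_empty_or_nonempty with rfl | hne
  · exact hempty
  · exact SupClosed.finsetSup_mem (s := (N : Set (Finset ℕ))) (fun A hA B hB => huc A hA B hB)
      hne fun X hX => hT hX

lemma empty_notMem_J (N : Finset (Finset ℕ)) : ∅ ∉ J N :=
  fun h => (Finset.mem_filter.mp h).2.1 rfl

lemma exists_subset_J_sup_eq {N : Finset (Finset ℕ)} {X : Finset ℕ} (hX : X ∈ N) :
    ∃ T ⊆ J N, T.sup id = X := by
  induction X using Finset.strongInduction with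
  | _ X ih =>
    by_cases h0 : X = ∅
    · exact ⟨∅, Finset.empty_subset _, h0.symm⟩
    by_cases hirr : ∀ A ∈ N, ∀ B ∈ N, X = A ∪ B → A = X ∨ B = X
    · exact ⟨{X}, Finset.singleton_subset_iff.mpr (Finset.mem_filter.mpr ⟨hX, h0, hirr⟩),
        Finset.sup_singleton⟩
    push Not at hirr
    obtain ⟨A, hA, B, hB, rfl, hAX, hBX⟩ := hirr
    obtain ⟨TA, hTA, rfl⟩ := ih A (Finset.subset_union_left.ssubset_of_ne hAX) hA
    obtain ⟨TB, hTB, rfl⟩ := ih B (Finset.subset_union_right.ssubset_of_ne hBX) hB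
    exact ⟨TA ∪ TB, Finset.union_subset hTA hTB, Finset.sup_union⟩

lemma gen_J_eq {N : Finset (Finset ℕ)} (huc : unionClosed N) (hempty : ∅ ∈ N) :
    gen (J N) = N := by
  ext X
  simp only [gen, Finset.mem_image, Finset.mem_powerset]
  constructor
  · rintro ⟨T, hT, rfl⟩
    exact sup_mem_of_unionClosed_s13 huc hempty (hT.trans (Finset.filter_subset _ _))
  · exact exists_subset_J_sup_eq

lemma iota_iota_of_subset {n s i : ℕ} {H : ℕ → Finset ℕ} (hi : i ∈ Finset.Icc 1 s)
    (hHi : H i ⊆ Finset.Icc 1 n) : iota n (iota s H) i = H i := by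
  ext j
  simp only [iota, Finset.mem_filter]
  exact ⟨fun h => h.2.2, fun h => ⟨hHi h, hi, h⟩⟩

lemma image_iota_iota {n s : ℕ} {H : ℕ → Finset ℕ}
    (hH : ∀ i ∈ Finset.Icc 1 s, H i ⊆ Finset.Icc 1 n) :
    (Finset.Icc 1 s).image (iota n (iota s H)) = (Finset.Icc 1 s).image H :=
  Finset.image_congr fun i hi => iota_iota_of_subset hi (hH i hi)

theorem stmt13 (n s : ℕ) (N : Finset (Finset ℕ)) (hnorm : normalized N)
    (hU : famUniv N = Finset.Icc 1 n)
    (H : ℕ → Finset ℕ) (hH : isIndexing (J N) s H) :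
    dualFam s n (iota s H) = N := by
  obtain ⟨-, huc, hempty, -⟩ := hnorm
  obtain ⟨-, himg⟩ := hH
  rw [Finset.erase_eq_self.mpr (empty_notMem_J N)] at himg
  have hH_univ : ∀ i ∈ Finset.Icc 1 s, H i ⊆ Finset.Icc 1 n := fun i hi =>
    hU ▸ Finset.le_sup (f := id) (Finset.filter_subset _ _ (himg ▸ Finset.mem_image_of_mem H hi))
  rw [dualFam, image_iota_iota hH_univ, himg, gen_J_eq huc hempty]
end

section
/- The following two statements are equivalent: (P) every finite union-closed family 𝓕 of finite sets with 𝓕 ≠ ∅, {∅} which is not the power set of its universe (𝓕 ≠ 𝒫(U(𝓕))) contains an element of its universe that belongs to strictly more than |𝓕|/2 of its sets; (W) every finite union-closed family 𝓕 of finite sets with 𝓕 ≠ ∅, {∅} in which the maximum of |𝓕_a| over a ∈ U(𝓕) equals exactly |𝓕|/2 is the power set of its universe. -/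
lemma subset_famUniv {F : Finset (Finset ℕ)} {A : Finset ℕ} (hA : A ∈ F) : A ⊆ famUniv F :=
  Finset.le_sup (f := id) hA

theorem stmt18 :
    (∀ F : Finset (Finset ℕ), unionClosed F → F ≠ ∅ → F ≠ {∅} →
      F ≠ (famUniv F).powerset →
      ∃ a ∈ famUniv F, F.card < 2 * (famAt F a).card) ↔
    (∀ F : Finset (Finset ℕ), unionClosed F → F ≠ ∅ → F ≠ {∅} →
      2 * ((famUniv F).sup fun a => (famAt F a).card) = F.card →
      F = (famUniv F).powerset) := by
  constructor
  · intro P F hUC hne hne1 hmax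
    by_contra hpow
    obtain ⟨a, ha, hlt⟩ := P F hUC hne hne1 hpow
    have hle : (famAt F a).card ≤ (famUniv F).sup fun a => (famAt F a).card :=
      Finset.le_sup (f := fun a => (famAt F a).card) ha
    omega
  · intro W F hUC hne hne1 hpow
    by_contra hno
    push_neg at hno
    -- hno : ∀ a ∈ famUniv F, 2 * (famAt F a).card ≤ F.card
    set b : ℕ := (famUniv F).sup id + 1 with hb
    have hbU : b ∉ famUniv F := by
      intro h
      have := Finset.le_sup (f := id) h
      simp only [id] at this
      omega
    have hbF : ∀ A ∈ F, b ∉ A := fun A hA hmem => hbU (subset_famUniv hA hmem)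
    set F' : Finset (Finset ℕ) := F ∪ F.image (insert b) with hF'
    have hmem' : ∀ X, X ∈ F' ↔ X ∈ F ∨ ∃ A ∈ F, insert b A = X := by
      intro X
      simp [hF', Finset.mem_union, Finset.mem_image]
    obtain ⟨A0, hA0⟩ := Finset.nonempty_of_ne_empty hne
    -- universe of F'
    have hUniv' : famUniv F' = insert b (famUniv F) := by
      ext x
      simp only [famUniv, Finset.mem_sup, id, Finset.mem_insert]
      constructor
      · rintro ⟨A, hA, hx⟩
        rw [hmem'] at hA
        rcases hA with hA | ⟨A1, hA1, rfl⟩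
        · exact Or.inr ⟨A, hA, hx⟩
        · rcases Finset.mem_insert.mp hx with rfl | hx
          · exact Or.inl rfl
          · exact Or.inr ⟨A1, hA1, hx⟩
      · rintro (hxb | ⟨A, hA, hx⟩)
        · exact ⟨insert b A0, (hmem' _).mpr (Or.inr ⟨A0, hA0, rfl⟩),
            by rw [hxb]; exact Finset.mem_insert_self _ _⟩
        · exact ⟨A, (hmem' _).mpr (Or.inl hA), hx⟩
    -- injectivity of insert b on F
    have hinj : Set.InjOn (insert b) (F : Set (Finset ℕ)) := by
      intro A1 h1 A2 h2 heq
      rw [← Finset.erase_insert (hbF A1 h1), heq, Finset.erase_insert (hbF A2 h2)]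
    have hdisj : Disjoint F (F.image (insert b)) := by
      rw [Finset.disjoint_left]
      intro X hX hX'
      obtain ⟨A, hA, rfl⟩ := Finset.mem_image.mp hX'
      exact hbF _ hX (Finset.mem_insert_self _ _)
    have hcard' : F'.card = 2 * F.card := by
      rw [hF', Finset.card_union_of_disjoint hdisj, Finset.card_image_of_injOn hinj]
      omega
    -- famAt F' b
    have hatb : famAt F' b = F.image (insert b) := by
      ext X
      simp only [famAt, Finset.mem_filter, hmem' X, Finset.mem_image]
      constructor
      · rintro ⟨hX | ⟨A, hA, rfl⟩, hbX⟩
        · exact absurd hbX (hbF _ hX)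
        · exact ⟨A, hA, rfl⟩
      · rintro ⟨A, hA, rfl⟩
        exact ⟨Or.inr ⟨A, hA, rfl⟩, Finset.mem_insert_self _ _⟩
    have hatbcard : (famAt F' b).card = F.card := by
      rw [hatb, Finset.card_image_of_injOn hinj]
    -- famAt F' a for a ≠ b
    have hata : ∀ a ∈ famUniv F, (famAt F' a).card = 2 * (famAt F a).card := by
      intro a ha
      have hab : a ≠ b := fun h => hbU (h ▸ ha)
      have : famAt F' a = famAt F a ∪ (famAt F a).image (insert b) := by
        ext X
        simp only [famAt, Finset.mem_filter, Finset.mem_union, Finset.mem_image, hmem' X]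
        constructor
        · rintro ⟨hX | ⟨A, hA, rfl⟩, haX⟩
          · exact Or.inl ⟨hX, haX⟩
          · refine Or.inr ⟨A, ⟨hA, ?_⟩, rfl⟩
            rcases Finset.mem_insert.mp haX with rfl | h
            · exact absurd rfl hab
            · exact h
        · rintro (⟨hX, haX⟩ | ⟨A, ⟨hA, haA⟩, rfl⟩)
          · exact ⟨Or.inl hX, haX⟩
          · exact ⟨Or.inr ⟨A, hA, rfl⟩, Finset.mem_insert_of_mem haA⟩
      rw [this, Finset.card_union_of_disjoint, Finset.card_image_of_injOn]
      · omega
      · exact hinj.mono (fun X hX => Finset.mem_filter.mp hX |>.1)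
      · rw [Finset.disjoint_left]
        intro X hX hX'
        obtain ⟨A, hA, rfl⟩ := Finset.mem_image.mp hX'
        exact hbF _ (Finset.mem_filter.mp hX).1 (Finset.mem_insert_self _ _)
    -- F' is union-closed
    have hUC' : unionClosed F' := by
      intro A hA B hB
      rw [hmem'] at hA hB ⊢
      rcases hA with hA | ⟨A1, hA1, rfl⟩ <;> rcases hB with hB | ⟨B1, hB1, rfl⟩
      · exact Or.inl (hUC A hA B hB)
      · refine Or.inr ⟨A ∪ B1, hUC A hA B1 hB1, ?_⟩
        simp [Finset.union_insert, Finset.insert_union]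
      · refine Or.inr ⟨A1 ∪ B, hUC A1 hA1 B hB, ?_⟩
        simp [Finset.union_insert, Finset.insert_union]
      · refine Or.inr ⟨A1 ∪ B1, hUC A1 hA1 B1 hB1, ?_⟩
        simp [Finset.union_insert, Finset.insert_union]
    -- F' ≠ ∅
    have hne' : F' ≠ ∅ := by
      intro h
      have : A0 ∈ F' := (hmem' _).mpr (Or.inl hA0)
      simp [h] at this
    have hbmem : insert b A0 ∈ F' := (hmem' _).mpr (Or.inr ⟨A0, hA0, rfl⟩)
    have hne1' : F' ≠ {∅} := by
      intro h
      rw [h] at hbmem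
      simp at hbmem
    -- the sup condition
    have hbU' : b ∈ famUniv F' := by rw [hUniv']; exact Finset.mem_insert_self _ _
    have hsup : 2 * ((famUniv F').sup fun a => (famAt F' a).card) = F'.card := by
      have h1 : ((famUniv F').sup fun a => (famAt F' a).card) = F.card := by
        apply le_antisymm
        · apply Finset.sup_le
          intro a ha
          rw [hUniv'] at ha
          rcases Finset.mem_insert.mp ha with rfl | ha
          · rw [hatbcard]
          · rw [hata a ha]
            exact le_trans (hno a ha) (le_refl _)
        · calc F.card = (famAt F' b).card := hatbcard.symm
            _ ≤ _ := Finset.le_sup (f := fun a => (famAt F' a).card) hbU'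
      rw [h1, hcard']
    -- conclude F' is a powerset, contradiction
    have hpow' := W F' hUC' hne' hne1' hsup
    -- F ≠ powerset means there is X ⊆ famUniv F with X ∉ F
    have hFsub : F ⊆ (famUniv F).powerset := by
      intro A hA
      exact Finset.mem_powerset.mpr (subset_famUniv hA)
    obtain ⟨X, hX, hXF⟩ := Finset.exists_of_ssubset (lt_of_le_of_ne hFsub hpow)
    have hXsub : X ⊆ famUniv F := Finset.mem_powerset.mp hX
    have hXF' : X ∈ F' := by
      rw [hpow', hUniv']
      exact Finset.mem_powerset.mpr (hXsub.trans (Finset.subset_insert _ _))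
    rw [hmem'] at hXF'
    rcases hXF' with h | ⟨A, hA, rfl⟩
    · exact hXF h
    · exact hbU (hXsub (Finset.mem_insert_self _ _))
end
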